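/- arXiv:1810.11835 — 3 statements merged into one kernel-verified Lean document; each statement's English description precedes it below -/
import Mathlib

section
/- Let λ > 0, ω = 1, and on (−π/2, π/2) define ν(t) = λ^{-1/2}(cos t)^{-3/2} and κ(t) = −(λ/4)^{1/2}(cos t)^{3/2}. Then the function t ↦ 3ν(t)^{-2}κ(t)κ''(t) − 5ν(t)^{-2}κ'(t)² − 3ν(t)^{-3}ν'(t)κ(t)κ'(t) + 9ω κ(t)⁴ equals −9 (λ/4)^{2/3} · |κ(t)|^{8/3}, so that the equi-affine curvature κ_a(t) = (1/(9|κ(t)|^{8/3}))·(that expression) is the constant −(λ/4)^{2/3}. -/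
open Real

private lemma dkappa' (l : ℝ) {t : ℝ} (h : 0 < Real.cos t) :
    deriv (fun t => -((l/4) ^ ((1:ℝ)/2)) * Real.cos t ^ ((3:ℝ)/2)) t
      = (3:ℝ)/2 * (l/4) ^ ((1:ℝ)/2) * (Real.sin t * Real.cos t ^ ((1:ℝ)/2)) := by
  have H := (((Real.hasDerivAt_cos t).rpow_const (p := (3:ℝ)/2) (Or.inl h.ne'))).const_mul
    (-((l/4) ^ ((1:ℝ)/2)))
  rw [H.deriv]
  norm_num
  ring

private lemma dnu' (l : ℝ) {t : ℝ} (h : 0 < Real.cos t) :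
    deriv (fun t => l ^ (-(1:ℝ)/2) * Real.cos t ^ (-(3:ℝ)/2)) t
      = (3:ℝ)/2 * l ^ (-(1:ℝ)/2) * (Real.sin t * Real.cos t ^ (-(5:ℝ)/2)) := by
  have H := (((Real.hasDerivAt_cos t).rpow_const (p := -(3:ℝ)/2) (Or.inl h.ne'))).const_mul
    (l ^ (-(1:ℝ)/2))
  rw [H.deriv]
  have : (-(3:ℝ)/2 - 1) = -(5:ℝ)/2 := by norm_num
  rw [this]; ring

private lemma dg' (l : ℝ) {t : ℝ} (h : 0 < Real.cos t) :
    deriv (fun t => (3:ℝ)/2 * (l/4) ^ ((1:ℝ)/2) * (Real.sin t * Real.cos t ^ ((1:ℝ)/2))) t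
      = (3:ℝ)/2 * (l/4) ^ ((1:ℝ)/2) *
        (Real.cos t * Real.cos t ^ ((1:ℝ)/2)
          + Real.sin t * (-Real.sin t * ((1:ℝ)/2) * Real.cos t ^ (-(1:ℝ)/2))) := by
  have H := (((Real.hasDerivAt_sin t).mul
      ((Real.hasDerivAt_cos t).rpow_const (p := (1:ℝ)/2) (Or.inl h.ne')))).const_mul
    ((3:ℝ)/2 * (l/4) ^ ((1:ℝ)/2))
  have H2 : deriv (fun t => (3:ℝ)/2 * (l/4) ^ ((1:ℝ)/2) * (Real.sin t * Real.cos t ^ ((1:ℝ)/2))) t = _ := H.deriv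
  rw [H2]
  have : ((1:ℝ)/2 - 1) = -(1:ℝ)/2 := by norm_num
  rw [this]

private lemma ddkappa' (l : ℝ) {t : ℝ} (h : 0 < Real.cos t) :
    deriv (deriv (fun t => -((l/4) ^ ((1:ℝ)/2)) * Real.cos t ^ ((3:ℝ)/2))) t
      = (3:ℝ)/2 * (l/4) ^ ((1:ℝ)/2) *
        (Real.cos t * Real.cos t ^ ((1:ℝ)/2)
          + Real.sin t * (-Real.sin t * ((1:ℝ)/2) * Real.cos t ^ (-(1:ℝ)/2))) := by
  rw [← dg' l h]
  apply Filter.EventuallyEq.deriv_eq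
  have hmem : {s : ℝ | 0 < Real.cos s} ∈ nhds t :=
    (isOpen_lt continuous_const Real.continuous_cos).mem_nhds h
  filter_upwards [hmem] with s hs
  exact dkappa' l hs

/-- Example (ii) of the paper: for `ν(t) = λ^{-1/2}(cos t)^{-3/2}` and
`κ(t) = −(λ/4)^{1/2}(cos t)^{3/2}` with `λ > 0`, `ω = 1`, the expression
`3ν⁻²κκ'' − 5ν⁻²κ'² − 3ν⁻³ν'κκ' + 9ωκ⁴` equals `−9(λ/4)^{2/3}|κ|^{8/3}`, so the
equi-affine curvature is the constant `−(λ/4)^{2/3}`. -/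
theorem stmt15 (l : ℝ) (hl : 0 < l) (ω : ℝ) (hω : ω = 1)
    (ν κ : ℝ → ℝ)
    (hν : ∀ t, ν t = l ^ (-(1 : ℝ)/2) * (Real.cos t) ^ (-(3 : ℝ)/2))
    (hκ : ∀ t, κ t = -((l/4) ^ ((1 : ℝ)/2)) * (Real.cos t) ^ ((3 : ℝ)/2)) :
    ∀ t ∈ Set.Ioo (-(Real.pi/2)) (Real.pi/2),
      (3 * ν t ^ (-(2 : ℝ)) * κ t * deriv (deriv κ) t
          - 5 * ν t ^ (-(2 : ℝ)) * (deriv κ t) ^ 2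
          - 3 * ν t ^ (-(3 : ℝ)) * deriv ν t * κ t * deriv κ t
          + 9 * ω * κ t ^ 4)
        = -9 * (l/4) ^ ((2 : ℝ)/3) * |κ t| ^ ((8 : ℝ)/3) ∧
      (1 / (9 * |κ t| ^ ((8 : ℝ)/3)))
          * (3 * ν t ^ (-(2 : ℝ)) * κ t * deriv (deriv κ) t
              - 5 * ν t ^ (-(2 : ℝ)) * (deriv κ t) ^ 2
              - 3 * ν t ^ (-(3 : ℝ)) * deriv ν t * κ t * deriv κ t
              + 9 * ω * κ t ^ 4)
        = -((l/4) ^ ((2 : ℝ)/3)) := by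
  intro t ht
  have hu : 0 < Real.cos t := Real.cos_pos_of_mem_Ioo ht
  have hκfun : κ = fun t => -((l/4) ^ ((1:ℝ)/2)) * Real.cos t ^ ((3:ℝ)/2) := funext hκ
  have hνfun : ν = fun t => l ^ (-(1:ℝ)/2) * Real.cos t ^ (-(3:ℝ)/2) := funext hν
  have hκne : κ t ≠ 0 := by
    rw [hκ t]
    have : (0:ℝ) < (l/4) ^ ((1:ℝ)/2) * Real.cos t ^ ((3:ℝ)/2) := by positivity
    intro hcontra; rw [neg_mul] at hcontra; linarith [neg_eq_zero.mp hcontra ▸ this]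
  have hXpos : 0 < |κ t| ^ ((8:ℝ)/3) := Real.rpow_pos_of_pos (abs_pos.2 hκne) _
  have key : (3 * ν t ^ (-(2 : ℝ)) * κ t * deriv (deriv κ) t
          - 5 * ν t ^ (-(2 : ℝ)) * (deriv κ t) ^ 2
          - 3 * ν t ^ (-(3 : ℝ)) * deriv ν t * κ t * deriv κ t
          + 9 * ω * κ t ^ 4)
        = -9 * (l/4) ^ ((2 : ℝ)/3) * |κ t| ^ ((8 : ℝ)/3) := by
    rw [hκ t, hν t, hκfun, hνfun, hω, dkappa' l hu, ddkappa' l hu, dnu' l hu]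
    set A : ℝ := Real.cos t ^ ((1:ℝ)/2) with hAdef
    set L : ℝ := l ^ ((1:ℝ)/2) with hLdef
    have hA : 0 < A := Real.rpow_pos_of_pos hu _
    have hL : 0 < L := Real.rpow_pos_of_pos hl _
    have hA2 : A^2 = Real.cos t := by
      rw [hAdef, ← Real.rpow_natCast (Real.cos t ^ ((1:ℝ)/2)) 2, ← Real.rpow_mul hu.le]
      norm_num
    have hL2 : L^2 = l := by
      rw [hLdef, ← Real.rpow_natCast (l ^ ((1:ℝ)/2)) 2, ← Real.rpow_mul hl.le]
      norm_num
    have e1 : Real.cos t ^ ((3:ℝ)/2) = A^3 := by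
      rw [hAdef, ← Real.rpow_natCast (Real.cos t ^ ((1:ℝ)/2)) 3, ← Real.rpow_mul hu.le]
      norm_num
    have e2 : Real.cos t ^ (-(3:ℝ)/2) = (A^3)⁻¹ := by
      rw [← e1, ← Real.rpow_neg_one (Real.cos t ^ ((3:ℝ)/2)), ← Real.rpow_mul hu.le]
      norm_num
    have e3 : Real.cos t ^ (-(5:ℝ)/2) = (A^5)⁻¹ := by
      have h5 : Real.cos t ^ ((5:ℝ)/2) = A^5 := by
        rw [hAdef, ← Real.rpow_natCast (Real.cos t ^ ((1:ℝ)/2)) 5, ← Real.rpow_mul hu.le]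
        norm_num
      rw [← h5, ← Real.rpow_neg_one (Real.cos t ^ ((5:ℝ)/2)), ← Real.rpow_mul hu.le]
      norm_num
    have e10 : Real.cos t ^ (-(1:ℝ)/2) = A⁻¹ := by
      rw [hAdef, ← Real.rpow_neg_one (Real.cos t ^ ((1:ℝ)/2)), ← Real.rpow_mul hu.le]
      norm_num
    have e4 : l ^ (-(1:ℝ)/2) = L⁻¹ := by
      rw [hLdef, ← Real.rpow_neg_one (l ^ ((1:ℝ)/2)), ← Real.rpow_mul hl.le]
      norm_num
    have e9 : (l/4) ^ ((1:ℝ)/2) = L/2 := by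
      rw [Real.div_rpow hl.le (by norm_num : (0:ℝ) ≤ 4), hLdef]
      norm_num
    have e5 : (L⁻¹ * (A^3)⁻¹) ^ (-(2:ℝ)) = L^2 * A^6 := by
      rw [Real.mul_rpow (by positivity) (by positivity),
        ← Real.rpow_neg_one L, ← Real.rpow_mul hL.le,
        ← Real.rpow_neg_one (A^3), ← Real.rpow_natCast A 3, ← Real.rpow_mul hA.le,
        ← Real.rpow_mul hA.le]
      rw [show (-1:ℝ) * -2 = ((2:ℕ):ℝ) by norm_num,
        show ((3:ℕ):ℝ) * -1 * -2 = ((6:ℕ):ℝ) by norm_num, Real.rpow_natCast, Real.rpow_natCast]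
    have e6 : (L⁻¹ * (A^3)⁻¹) ^ (-(3:ℝ)) = L^3 * A^9 := by
      rw [Real.mul_rpow (by positivity) (by positivity),
        ← Real.rpow_neg_one L, ← Real.rpow_mul hL.le,
        ← Real.rpow_neg_one (A^3), ← Real.rpow_natCast A 3, ← Real.rpow_mul hA.le,
        ← Real.rpow_mul hA.le]
      rw [show (-1:ℝ) * -3 = ((3:ℕ):ℝ) by norm_num,
        show ((3:ℕ):ℝ) * -1 * -3 = ((9:ℕ):ℝ) by norm_num, Real.rpow_natCast, Real.rpow_natCast]
    have e7 : |(-((l/4) ^ ((1:ℝ)/2)) * Real.cos t ^ ((3:ℝ)/2))| ^ ((8:ℝ)/3)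
        = (l/4) ^ ((4:ℝ)/3) * A^8 := by
      have hpos : (0:ℝ) < (l/4) ^ ((1:ℝ)/2) * Real.cos t ^ ((3:ℝ)/2) := by positivity
      rw [show -((l/4) ^ ((1:ℝ)/2)) * Real.cos t ^ ((3:ℝ)/2)
          = -((l/4) ^ ((1:ℝ)/2) * Real.cos t ^ ((3:ℝ)/2)) by ring, abs_neg, abs_of_pos hpos,
        Real.mul_rpow (by positivity) (by positivity),
        ← Real.rpow_mul (by positivity : (0:ℝ) ≤ l/4),
        ← Real.rpow_mul hu.le]
      rw [show (1:ℝ)/2 * ((8:ℝ)/3) = (4:ℝ)/3 by norm_num,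
        show (3:ℝ)/2 * ((8:ℝ)/3) = ((4:ℕ):ℝ) by norm_num, Real.rpow_natCast, ← hA2]
      ring
    have e8 : (l/4) ^ ((2:ℝ)/3) * (l/4) ^ ((4:ℝ)/3) = (l/4)^2 := by
      rw [← Real.rpow_add (by positivity : (0:ℝ) < l/4),
        show (2:ℝ)/3 + (4:ℝ)/3 = ((2:ℕ):ℝ) by norm_num, Real.rpow_natCast]
    have hs2 : Real.sin t ^ 2 = 1 - (A^2)^2 := by
      rw [hA2, Real.sin_sq]
    rw [e7, e4, e2, e5, e6, e9, e1, e3, e10, ← hA2]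
    have eR : -9 * (l/4) ^ ((2:ℝ)/3) * ((l/4) ^ ((4:ℝ)/3) * A^8)
        = -(9:ℝ)/16 * L^4 * A^8 := by
      rw [show -9 * (l/4) ^ ((2:ℝ)/3) * ((l/4) ^ ((4:ℝ)/3) * A^8)
          = -9 * ((l/4) ^ ((2:ℝ)/3) * (l/4) ^ ((4:ℝ)/3)) * A^8 by ring, e8, ← hL2]
      ring
    rw [eR]
    field_simp
    ring_nf
    rw [hs2]
    ring
  refine ⟨key, ?_⟩
  rw [key]
  field_simp
end

section
/- Let λ > 0, ω = −1, and on ℝ define ν(t) = λ^{-1/2}(cosh t)^{-3/2} and κ(t) = (λ/4)^{1/2}(cosh t)^{3/2}. Then the function t ↦ 3ν(t)^{-2}κ(t)κ''(t) − 5ν(t)^{-2}κ'(t)² − 3ν(t)^{-3}ν'(t)κ(t)κ'(t) + 9ω κ(t)⁴ equals 9(λ/4)^{2/3} κ(t)^{8/3}, so that the equi-affine curvature κ_a(t) = (1/(9κ(t)^{8/3})) · (that expression) is the constant (λ/4)^{2/3}. -/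
/-!
The two data are tied together by `ν = 1 / (2κ)`, and both are constant multiples of powers of
`cosh`, whose logarithmic derivative is `tanh`. Substituting, the numerator collapses to
`9 κ⁴ / cosh² t` by `cosh² − sinh² = 1`, and `κ^{4/3} = (λ/4)^{2/3} cosh² t` turns this into
`9 (λ/4)^{2/3} κ^{8/3}`.
-/

open Real

theorem hasDerivAt_mul_cosh_rpow (A p t : ℝ) :
    HasDerivAt (fun s => A * cosh s ^ p) (p * (sinh t / cosh t) * (A * cosh t ^ p)) t := by
  have h := ((hasDerivAt_cosh t).rpow_const (p := p) (Or.inl (cosh_pos t).ne')).const_mul A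
  refine h.congr_deriv ?_
  rw [rpow_sub_one (cosh_pos t).ne']
  ring

theorem deriv_mul_cosh_rpow (A p : ℝ) :
    deriv (fun s => A * cosh s ^ p) = fun t => p * (sinh t / cosh t) * (A * cosh t ^ p) :=
  funext fun t => (hasDerivAt_mul_cosh_rpow A p t).deriv

theorem hasDerivAt_sinh_div_cosh (t : ℝ) :
    HasDerivAt (fun s => sinh s / cosh s) (1 / cosh t ^ 2) t := by
  refine ((hasDerivAt_sinh t).div (hasDerivAt_cosh t) (cosh_pos t).ne').congr_deriv ?_
  rw [← cosh_sq_sub_sinh_sq t]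
  ring

theorem deriv_deriv_mul_cosh_rpow (A p t : ℝ) :
    deriv (deriv fun s => A * cosh s ^ p) t
      = p * (p * sinh t ^ 2 + 1) / cosh t ^ 2 * (A * cosh t ^ p) := by
  rw [deriv_mul_cosh_rpow]
  refine (((hasDerivAt_sinh_div_cosh t).const_mul p).mul
    (hasDerivAt_mul_cosh_rpow A p t)).deriv.trans ?_
  field_simp
  ring

theorem mul_rpow_four_thirds {a x : ℝ} (ha : 0 ≤ a) (hx : 0 ≤ x) :
    (a ^ ((1 : ℝ) / 2) * x ^ ((3 : ℝ) / 2)) ^ ((4 : ℝ) / 3) = a ^ ((2 : ℝ) / 3) * x ^ 2 := by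
  rw [mul_rpow (by positivity) (by positivity), ← rpow_mul ha, ← rpow_mul hx,
    ← rpow_natCast x 2]
  norm_num

theorem equiAffine_numerator_identity {K S C : ℝ} (hC : C ≠ 0) (hSC : C ^ 2 - S ^ 2 = 1) :
    3 * (4 * K ^ 2) * K * (3 / 2 * (3 / 2 * S ^ 2 + 1) / C ^ 2 * K)
        - 5 * (4 * K ^ 2) * (3 / 2 * (S / C) * K) ^ 2
        - 3 * (4 * K ^ 2 * (-3 / 2 * (S / C))) * K * (3 / 2 * (S / C) * K)
        + 9 * (-1) * K ^ 4
      = 9 * K ^ 4 / C ^ 2 := by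
  have hS : S ^ 2 = C ^ 2 - 1 := by linarith
  field_simp
  rw [hS]
  ring

noncomputable def equiAffineNumerator (ω : ℝ) (ν κ : ℝ → ℝ) (t : ℝ) : ℝ :=
  3 * ν t ^ (-(2 : ℝ)) * κ t * deriv (deriv κ) t
    - 5 * ν t ^ (-(2 : ℝ)) * (deriv κ t) ^ 2
    - 3 * ν t ^ (-(3 : ℝ)) * deriv ν t * κ t * deriv κ t
    + 9 * ω * κ t ^ 4

theorem equiAffineNumerator_of_cosh_rpow {l ω : ℝ} (hl : 0 < l) (hω : ω = -1) {ν κ : ℝ → ℝ}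
    (hν : ∀ t, ν t = l ^ (-(1 : ℝ)/2) * cosh t ^ (-(3 : ℝ)/2))
    (hκ : ∀ t, κ t = (l/4) ^ ((1 : ℝ)/2) * cosh t ^ ((3 : ℝ)/2)) (t : ℝ) :
    equiAffineNumerator ω ν κ t = 9 * (l/4) ^ ((2 : ℝ)/3) * κ t ^ ((8 : ℝ)/3) := by
  have hκ_eq : κ = fun s => (l/4) ^ ((1 : ℝ)/2) * cosh s ^ ((3 : ℝ)/2) := funext hκ
  have hν_eq : ν = fun s => l ^ (-(1 : ℝ)/2) * cosh s ^ (-(3 : ℝ)/2) := funext hν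
  have hκ_pos : 0 < κ t := by rw [hκ]; positivity
  have hνκ : ν t = (2 * κ t)⁻¹ := by
    rw [hν, hκ, div_rpow hl.le (by norm_num), show (4 : ℝ) ^ ((1 : ℝ) / 2) = 2 by norm_num,
      neg_div, neg_div, rpow_neg hl.le, rpow_neg (cosh_pos t).le]
    field_simp
  have hν_pos : 0 < ν t := by rw [hνκ]; positivity
  have dκ : deriv κ t = 3 / 2 * (sinh t / cosh t) * κ t := by
    rw [hκ_eq, deriv_mul_cosh_rpow]
  have d2κ : deriv (deriv κ) t = 3 / 2 * (3 / 2 * sinh t ^ 2 + 1) / cosh t ^ 2 * κ t := by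
    rw [hκ_eq, deriv_deriv_mul_cosh_rpow]
  have dν : deriv ν t = -3 / 2 * (sinh t / cosh t) * ν t := by
    rw [hν_eq, deriv_mul_cosh_rpow]
  have hν3 : ν t ^ (-(3 : ℝ)) * deriv ν t = ν t ^ (-(2 : ℝ)) * (-3 / 2 * (sinh t / cosh t)) := by
    rw [dν, show -(2 : ℝ) = -3 + 1 by norm_num, rpow_add_one hν_pos.ne']
    ring
  have hν2 : ν t ^ (-(2 : ℝ)) = 4 * κ t ^ 2 := by
    rw [hνκ, inv_rpow (by positivity), rpow_neg (by positivity), inv_inv, rpow_ofNat]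
    ring
  have hκ4 : κ t ^ 4 = κ t ^ ((8 : ℝ)/3) * ((l/4) ^ ((2 : ℝ)/3) * cosh t ^ 2) := by
    rw [hκ, ← mul_rpow_four_thirds (by positivity) (cosh_pos t).le, ← hκ,
      ← rpow_add hκ_pos, ← rpow_natCast]
    norm_num
  rw [equiAffineNumerator, mul_assoc 3 (ν t ^ (-(3 : ℝ))), hν3, hν2, dκ, d2κ, hω,
    equiAffine_numerator_identity (cosh_pos t).ne' (cosh_sq_sub_sinh_sq t), hκ4]
  field_simp

/-- Example (iii) of the paper: for `ν(t) = λ^{-1/2}(cosh t)^{-3/2}` and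
`κ(t) = (λ/4)^{1/2}(cosh t)^{3/2}` with `λ > 0`, `ω = −1`, the expression
`3ν⁻²κκ'' − 5ν⁻²κ'² − 3ν⁻³ν'κκ' + 9ωκ⁴` equals `9(λ/4)^{2/3}κ^{8/3}`, so the
equi-affine curvature is the constant `(λ/4)^{2/3}`. -/
theorem stmt16 (l : ℝ) (hl : 0 < l) (ω : ℝ) (hω : ω = -1)
    (ν κ : ℝ → ℝ)
    (hν : ∀ t, ν t = l ^ (-(1 : ℝ)/2) * (Real.cosh t) ^ (-(3 : ℝ)/2))
    (hκ : ∀ t, κ t = (l/4) ^ ((1 : ℝ)/2) * (Real.cosh t) ^ ((3 : ℝ)/2)) :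
    ∀ t : ℝ,
      (3 * ν t ^ (-(2 : ℝ)) * κ t * deriv (deriv κ) t
          - 5 * ν t ^ (-(2 : ℝ)) * (deriv κ t) ^ 2
          - 3 * ν t ^ (-(3 : ℝ)) * deriv ν t * κ t * deriv κ t
          + 9 * ω * κ t ^ 4)
        = 9 * (l/4) ^ ((2 : ℝ)/3) * κ t ^ ((8 : ℝ)/3) ∧
      (1 / (9 * κ t ^ ((8 : ℝ)/3)))
          * (3 * ν t ^ (-(2 : ℝ)) * κ t * deriv (deriv κ) t
              - 5 * ν t ^ (-(2 : ℝ)) * (deriv κ t) ^ 2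
              - 3 * ν t ^ (-(3 : ℝ)) * deriv ν t * κ t * deriv κ t
              + 9 * ω * κ t ^ 4)
        = (l/4) ^ ((2 : ℝ)/3) := by
  intro t
  have key := equiAffineNumerator_of_cosh_rpow hl hω hν hκ t
  have hκ_pos : 0 < κ t := by rw [hκ]; positivity
  unfold equiAffineNumerator at key
  refine ⟨key, ?_⟩
  rw [key]
  field_simp
end

section
/- Let ν : I → ℝ and κ : I → ℝ be smooth with ν > 0 and κ > 0 on an open interval I, let ω = ±1, and set φ = ν³κ (so φ > 0) and ψ = φ^{-1/3} = ν^{-1}κ^{-1/3}. Define B = (3νν'² − ν²ν'')κ + ν²ν'κ' + ω ν⁵κ³. Then −(1/2)(ψ²)'' + ψ⁵ B = (1/(9κ^{8/3}))(3ν^{-2}κκ'' − 5ν^{-2}κ'² − 3ν^{-3}ν'κκ' + 9ωκ⁴). -/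
private lemma rpow_third (x : ℝ) (hx : 0 < x) (m : ℕ) (y : ℝ) (hy : y = -(m:ℝ)/3) :
    x ^ y = ((x ^ ((1:ℝ)/3)) ^ m)⁻¹ := by
  rw [hy, ← Real.rpow_natCast (x ^ ((1:ℝ)/3)) m, ← Real.rpow_mul hx.le, ← Real.rpow_neg hx.le]
  congr 1; push_cast; ring

private lemma rpow_third' (x : ℝ) (hx : 0 < x) (m : ℕ) (y : ℝ) (hy : y = (m:ℝ)/3) :
    x ^ y = (x ^ ((1:ℝ)/3)) ^ m := by
  rw [hy, ← Real.rpow_natCast (x ^ ((1:ℝ)/3)) m, ← Real.rpow_mul hx.le]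
  congr 1; push_cast; ring

private lemma rpow_neg_nat (x : ℝ) (hx : 0 < x) (m : ℕ) (y : ℝ) (hy : y = -(m:ℝ)) :
    x ^ y = (x ^ m)⁻¹ := by
  rw [hy, Real.rpow_neg hx.le, Real.rpow_natCast]

/-- Analytic core of Theorem 4 of the paper: with `ψ = ν⁻¹κ^{-1/3}` and
`B = (3νν'² − ν²ν'')κ + ν²ν'κ' + ω ν⁵κ³`, one has
`−(1/2)(ψ²)'' + ψ⁵B
  = (1/(9κ^{8/3}))(3ν⁻²κκ'' − 5ν⁻²κ'² − 3ν⁻³ν'κκ' + 9ωκ⁴)`. -/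
theorem stmt19 (a b : ℝ) (ν κ : ℝ → ℝ) (ω : ℝ) (hω : ω = 1 ∨ ω = -1)
    (hν : ContDiffOn ℝ (⊤ : ℕ∞) ν (Set.Ioo a b))
    (hκ : ContDiffOn ℝ (⊤ : ℕ∞) κ (Set.Ioo a b))
    (hνpos : ∀ t ∈ Set.Ioo a b, 0 < ν t)
    (hκpos : ∀ t ∈ Set.Ioo a b, 0 < κ t)
    (ψ B : ℝ → ℝ)
    (hψ : ∀ t, ψ t = (ν t)⁻¹ * (κ t) ^ (-(1 : ℝ)/3))
    (hB : ∀ t, B t = (3 * ν t * (deriv ν t) ^ 2 - ν t ^ 2 * deriv (deriv ν) t) * κ t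
        + ν t ^ 2 * deriv ν t * deriv κ t + ω * ν t ^ 5 * κ t ^ 3) :
    ∀ t ∈ Set.Ioo a b,
      -(1/2) * deriv (deriv (fun u => ψ u ^ 2)) t + ψ t ^ 5 * B t
        = (1 / (9 * κ t ^ ((8 : ℝ)/3)))
            * (3 * ν t ^ (-(2 : ℝ)) * κ t * deriv (deriv κ) t
                - 5 * ν t ^ (-(2 : ℝ)) * (deriv κ t) ^ 2
                - 3 * ν t ^ (-(3 : ℝ)) * deriv ν t * κ t * deriv κ t
                + 9 * ω * κ t ^ 4) := by
  intro t ht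
  have hs : IsOpen (Set.Ioo a b) := isOpen_Ioo
  have hdν : ∀ u ∈ Set.Ioo a b, HasDerivAt ν (deriv ν u) u := fun u hu =>
    ((hν.contDiffAt (hs.mem_nhds hu)).differentiableAt (by simp)).hasDerivAt
  have hdκ : ∀ u ∈ Set.Ioo a b, HasDerivAt κ (deriv κ u) u := fun u hu =>
    ((hκ.contDiffAt (hs.mem_nhds hu)).differentiableAt (by simp)).hasDerivAt
  have hν1 : ContDiffOn ℝ (⊤ : ℕ∞) (deriv ν) (Set.Ioo a b) := hν.deriv_of_isOpen hs (by simp)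
  have hκ1 : ContDiffOn ℝ (⊤ : ℕ∞) (deriv κ) (Set.Ioo a b) := hκ.deriv_of_isOpen hs (by simp)
  have hdν1 : HasDerivAt (deriv ν) (deriv (deriv ν) t) t :=
    ((hν1.contDiffAt (hs.mem_nhds ht)).differentiableAt (by simp)).hasDerivAt
  have hdκ1 : HasDerivAt (deriv κ) (deriv (deriv κ) t) t :=
    ((hκ1.contDiffAt (hs.mem_nhds ht)).differentiableAt (by simp)).hasDerivAt
  have hFd : ∀ u ∈ Set.Ioo a b,
      HasDerivAt (fun u => ν u ^ (-(2:ℝ)) * κ u ^ (-(2:ℝ)/3))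
        (deriv ν u * (-(2:ℝ)) * ν u ^ (-(2:ℝ) - 1) * κ u ^ (-(2:ℝ)/3)
          + ν u ^ (-(2:ℝ)) * (deriv κ u * (-(2:ℝ)/3) * κ u ^ (-(2:ℝ)/3 - 1))) u := fun u hu =>
    ((hdν u hu).rpow_const (Or.inl (hνpos u hu).ne')).mul
      ((hdκ u hu).rpow_const (Or.inl (hκpos u hu).ne'))
  have hGd := ((((hdν1.mul_const (-(2:ℝ))).mul
          ((hdν t ht).rpow_const (p := -(2:ℝ) - 1) (Or.inl (hνpos t ht).ne'))).mul
          ((hdκ t ht).rpow_const (p := -(2:ℝ)/3) (Or.inl (hκpos t ht).ne'))).add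
        (((hdν t ht).rpow_const (p := -(2:ℝ)) (Or.inl (hνpos t ht).ne')).mul
          ((hdκ1.mul_const (-(2:ℝ)/3)).mul
            ((hdκ t ht).rpow_const (p := -(2:ℝ)/3 - 1) (Or.inl (hκpos t ht).ne')))))
  have hψ2 : ∀ u ∈ Set.Ioo a b,
      ψ u ^ 2 = ν u ^ (-(2:ℝ)) * κ u ^ (-(2:ℝ)/3) := by
    intro u hu
    have hN := hνpos u hu
    have hK := hκpos u hu
    rw [hψ, rpow_third (κ u) hK 1 (-(1:ℝ)/3) (by norm_num),
      rpow_third (κ u) hK 2 (-(2:ℝ)/3) (by norm_num),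
      rpow_neg_nat (ν u) hN 2 (-(2:ℝ)) (by push_cast; norm_num)]
    have : (0:ℝ) < κ u ^ ((1:ℝ)/3) := Real.rpow_pos_of_pos hK _
    field_simp
  have h1 : (fun u => ψ u ^ 2) =ᶠ[nhds t] (fun u => ν u ^ (-(2:ℝ)) * κ u ^ (-(2:ℝ)/3)) :=
    Filter.eventuallyEq_of_mem (hs.mem_nhds ht) hψ2
  have h3 : deriv (fun u => ν u ^ (-(2:ℝ)) * κ u ^ (-(2:ℝ)/3)) =ᶠ[nhds t]
      (fun u => deriv ν u * (-(2:ℝ)) * ν u ^ (-(2:ℝ) - 1) * κ u ^ (-(2:ℝ)/3)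
          + ν u ^ (-(2:ℝ)) * (deriv κ u * (-(2:ℝ)/3) * κ u ^ (-(2:ℝ)/3 - 1))) :=
    Filter.eventuallyEq_of_mem (hs.mem_nhds ht) (fun u hu => (hFd u hu).deriv)
  have key := Filter.EventuallyEq.deriv_eq (h1.deriv.trans h3)
  rw [key, HasDerivAt.deriv (f := fun u => deriv ν u * (-(2:ℝ)) * ν u ^ (-(2:ℝ) - 1) * κ u ^ (-(2:ℝ)/3)
            + ν u ^ (-(2:ℝ)) * (deriv κ u * (-(2:ℝ)/3) * κ u ^ (-(2:ℝ)/3 - 1))) hGd, hψ, hB]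
  simp only [Pi.mul_apply]
  have hN := hνpos t ht
  have hK := hκpos t ht
  have hc : (0:ℝ) < κ t ^ ((1:ℝ)/3) := Real.rpow_pos_of_pos hK _
  rw [rpow_third (κ t) hK 2 (-(2:ℝ)/3) (by norm_num),
    rpow_third (κ t) hK 5 (-(2:ℝ)/3 - 1) (by push_cast; norm_num),
    rpow_third (κ t) hK 8 (-(2:ℝ)/3 - 1 - 1) (by push_cast; norm_num),
    rpow_third (κ t) hK 1 (-(1:ℝ)/3) (by norm_num),
    rpow_third' (κ t) hK 8 ((8:ℝ)/3) (by norm_num),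
    rpow_neg_nat (ν t) hN 3 (-(2:ℝ) - 1) (by push_cast; norm_num),
    rpow_neg_nat (ν t) hN 4 (-(2:ℝ) - 1 - 1) (by push_cast; norm_num),
    rpow_neg_nat (ν t) hN 2 (-(2:ℝ)) (by push_cast; norm_num),
    rpow_neg_nat (ν t) hN 3 (-(3:ℝ)) (by push_cast; norm_num)]
  set c := κ t ^ ((1:ℝ)/3) with hcdef
  have hc3 : c ^ 3 = κ t := by
    rw [hcdef, ← Real.rpow_natCast (κ t ^ ((1:ℝ)/3)) 3, ← Real.rpow_mul hK.le]
    norm_num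
  rw [← hc3]
  field_simp
  ring
end
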